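/- Let (Ω, 𝔽, ℙ) be a probability space, A ∈ ℝ^{n×n}, B ∈ ℝ^{n×r}, F ∈ ℝ^{n×m}, and x_0 ∈ ℝⁿ deterministic. Let s_0, s_1, … (ℝ^r-valued) and w_0, w_1, … (ℝ^m-valued) be square-integrable random vectors such that the combined family {s_t}_{t∈ℕ} ∪ {w_t}_{t∈ℕ} is pairwise independent, each has mean zero, 𝔼[⟨u, s_t⟩²] ≥ ε_s·‖u‖² for some ε_s > 0 and all u ∈ ℝ^r, t ∈ ℕ, and 𝔼[⟨v, w_t⟩²] ≥ ε_w·‖v‖² for some ε_w ≥ 0 and all v ∈ ℝ^m, t ∈ ℕ. Define x_{k+1} = A x_k + B s_k + F w_k. Then for every k ∈ ℕ and every v ∈ ℝⁿ, 𝔼[⟨v, x_k⟩²] ≥ ε_s·∑_{j=0}^{k-1} ‖Bᵀ (Aᵀ)^j v‖² + ε_w·∑_{j=0}^{k-1} ‖Fᵀ (Aᵀ)^j v‖². -/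

import Mathlib

/-!
Unrolling the recursion writes `⟨v, x_k⟩` as the constant `⟨v, A^k x₀⟩` plus the `2k` terms
`⟨Bᵀ (Aᵀ)^(k-1-t) v, s_t⟩` and `⟨Fᵀ (Aᵀ)^(k-1-t) v, w_t⟩`, `t < k`, which are pairwise
independent and centred. The second moment dominates the variance, the variance of a sum of
pairwise independent terms is the sum of their variances, and for centred terms these are second
moments, which the excitation bounds control; reversing `t ↦ k - 1 - t` gives the stated sums.
-/

open Matrix MeasureTheory ProbabilityTheory Finset

namespace Matrix

variable {R ι : Type*} [Fintype ι]

theorem dotProduct_mulVec_eq_transpose_mulVec_dotProduct {κ : Type*} [CommSemiring R]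
    [Fintype κ] (v : ι → R) (M : Matrix ι κ R) (y : κ → R) :
    v ⬝ᵥ M *ᵥ y = Mᵀ *ᵥ v ⬝ᵥ y := by
  rw [dotProduct_mulVec, mulVec_transpose]

theorem eq_pow_mulVec_add_sum_of_succ [CommSemiring R] [DecidableEq ι] (A : Matrix ι ι R)
    {x b : ℕ → ι → R} (hx : ∀ k, x (k + 1) = A *ᵥ x k + b k) (k : ℕ) :
    x k = (A ^ k) *ᵥ x 0 + ∑ j ∈ range k, (A ^ (k - 1 - j)) *ᵥ b j := by
  induction k with
  | zero => simp
  | succ k ih =>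
    have hpow : ∀ j ∈ range k, A *ᵥ (A ^ (k - 1 - j)) *ᵥ b j = (A ^ (k - j)) *ᵥ b j := by
      intro j hj
      rw [mulVec_mulVec, ← pow_succ']
      have := mem_range.mp hj
      congr 2
      omega
    rw [hx, ih, mulVec_add, mulVec_mulVec, ← pow_succ', mulVec_sum, sum_congr rfl hpow,
      sum_range_succ, Nat.add_sub_cancel, Nat.sub_self, pow_zero, one_mulVec, add_assoc]

end Matrix

section RandomVectors

variable {Ω ι : Type*} [MeasurableSpace Ω] {μ : Measure Ω} [Fintype ι] {f : Ω → ι → ℝ}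

theorem memLp_dotProduct {p : ENNReal} (hf : ∀ i, MemLp (fun ω => f ω i) p μ) (u : ι → ℝ) :
    MemLp (fun ω => u ⬝ᵥ f ω) p μ := by
  simpa only [dotProduct] using memLp_finsetSum univ fun i _ => (hf i).const_mul (u i)

theorem integral_dotProduct (hf : ∀ i, Integrable (fun ω => f ω i) μ) (u : ι → ℝ) :
    ∫ ω, u ⬝ᵥ f ω ∂μ = u ⬝ᵥ fun i => ∫ ω, f ω i ∂μ := by
  simp only [dotProduct]
  rw [integral_finsetSum _ fun i _ => (hf i).const_mul (u i)]
  simp_rw [integral_const_mul]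

theorem ProbabilityTheory.IndepFun.dotProduct {κ : Type*} [Fintype κ] {g : Ω → κ → ℝ}
    (h : IndepFun f g μ) (u : ι → ℝ) (u' : κ → ℝ) :
    IndepFun (fun ω => u ⬝ᵥ f ω) (fun ω => u' ⬝ᵥ g ω) μ :=
  h.comp (continuous_const.dotProduct continuous_id).measurable
    (continuous_const.dotProduct continuous_id).measurable

end RandomVectors

theorem sum_integral_sq_le_integral_sq_const_add_sum {Ω ι : Type*} [MeasurableSpace Ω]
    {μ : Measure Ω} [IsProbabilityMeasure μ] {X : ι → Ω → ℝ} {s : Finset ι}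
    (hX : ∀ i ∈ s, MemLp (X i) 2 μ)
    (hindep : Set.Pairwise ↑s fun i j => IndepFun (X i) (X j) μ)
    (hmean : ∀ i ∈ s, ∫ ω, X i ω ∂μ = 0) (c : ℝ) :
    ∑ i ∈ s, ∫ ω, X i ω ^ 2 ∂μ ≤ ∫ ω, (c + ∑ i ∈ s, X i ω) ^ 2 ∂μ := by
  have hsum : AEStronglyMeasurable (∑ i ∈ s, X i) μ :=
    (memLp_finsetSum' s hX).aestronglyMeasurable
  calc ∑ i ∈ s, ∫ ω, X i ω ^ 2 ∂μ = ∑ i ∈ s, Var[X i; μ] :=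
        sum_congr rfl fun i hi =>
          (variance_of_integral_eq_zero (hX i hi).aemeasurable (hmean i hi)).symm
    _ = Var[∑ i ∈ s, X i; μ] := (IndepFun.variance_sum hX hindep).symm
    _ = Var[fun ω => c + (∑ i ∈ s, X i) ω; μ] := (variance_const_add hsum c).symm
    _ ≤ ∫ ω, (c + ∑ i ∈ s, X i ω) ^ 2 ∂μ := by
        simpa using variance_le_expectation_sq (hsum.const_add c)

theorem sum_integral_sq_two_inputs_le {Ω : Type*} [MeasurableSpace Ω]
    {μ : Measure Ω} [IsProbabilityMeasure μ] {r m : ℕ}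
    {s : ℕ → Ω → Fin r → ℝ} {w : ℕ → Ω → Fin m → ℝ}
    (hsL2 : ∀ t i, MemLp (fun ω => s t ω i) 2 μ) (hwL2 : ∀ t i, MemLp (fun ω => w t ω i) 2 μ)
    (hss : ∀ t t', t ≠ t' → IndepFun (s t) (s t') μ)
    (hww : ∀ t t', t ≠ t' → IndepFun (w t) (w t') μ)
    (hsw : ∀ t t', IndepFun (s t) (w t') μ)
    (hsmean : ∀ t i, ∫ ω, s t ω i ∂μ = 0) (hwmean : ∀ t i, ∫ ω, w t ω i ∂μ = 0)
    (u : ℕ → Fin r → ℝ) (q : ℕ → Fin m → ℝ) (c : ℝ) (k : ℕ) :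
    ∑ t ∈ range k, ∫ ω, (u t ⬝ᵥ s t ω) ^ 2 ∂μ + ∑ t ∈ range k, ∫ ω, (q t ⬝ᵥ w t ω) ^ 2 ∂μ ≤
      ∫ ω, (c + ∑ t ∈ range k, (u t ⬝ᵥ s t ω + q t ⬝ᵥ w t ω)) ^ 2 ∂μ := by
  let X : ℕ ⊕ ℕ → Ω → ℝ := Sum.elim (fun t ω => u t ⬝ᵥ s t ω) (fun t ω => q t ⬝ᵥ w t ω)
  have hX : ∀ i, MemLp (X i) 2 μ := by
    rintro (t | t)
    exacts [memLp_dotProduct (hsL2 t) (u t), memLp_dotProduct (hwL2 t) (q t)]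
  have hindep : Set.Pairwise ↑((range k).disjSum (range k)) fun i j => IndepFun (X i) (X j) μ := by
    rintro (t | t) - (t' | t') - hne
    · exact (hss t t' (by simpa using hne)).dotProduct (u t) (u t')
    · exact (hsw t t').dotProduct (u t) (q t')
    · exact (hsw t' t).symm.dotProduct (q t) (u t')
    · exact (hww t t' (by simpa using hne)).dotProduct (q t) (q t')
  have hmean : ∀ i, ∫ ω, X i ω ∂μ = 0 := by
    rintro (t | t)
    · simp [X, integral_dotProduct (fun i => (hsL2 t i).integrable one_le_two), hsmean]
    · simp [X, integral_dotProduct (fun i => (hwL2 t i).integrable one_le_two), hwmean]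
  simpa [X, sum_add_distrib] using
    sum_integral_sq_le_integral_sq_const_add_sum (fun i _ => hX i) hindep (fun i _ => hmean i) c

theorem second_moment_lower_bound_two_inputs_general {Ω : Type*} [MeasurableSpace Ω]
    (μ : Measure Ω) [IsProbabilityMeasure μ]
    (n r m : ℕ) (A : Matrix (Fin n) (Fin n) ℝ)
    (B : Matrix (Fin n) (Fin r) ℝ) (F : Matrix (Fin n) (Fin m) ℝ)
    (x0 : Fin n → ℝ)
    (s : ℕ → Ω → Fin r → ℝ) (w : ℕ → Ω → Fin m → ℝ)
    (hsL2 : ∀ t i, MemLp (fun ω => s t ω i) 2 μ)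
    (hwL2 : ∀ t i, MemLp (fun ω => w t ω i) 2 μ)
    -- the combined family {s_t} ∪ {w_t} is pairwise independent
    (hss : ∀ t t', t ≠ t' → IndepFun (s t) (s t') μ)
    (hww : ∀ t t', t ≠ t' → IndepFun (w t) (w t') μ)
    (hsw : ∀ t t', IndepFun (s t) (w t') μ)
    (hsmean : ∀ t i, ∫ ω, s t ω i ∂μ = 0)
    (hwmean : ∀ t i, ∫ ω, w t ω i ∂μ = 0)
    (εs : ℝ)
    (hsvar : ∀ t (u : Fin r → ℝ), ∫ ω, (u ⬝ᵥ s t ω) ^ 2 ∂μ ≥ εs * (u ⬝ᵥ u))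
    (εw : ℝ)
    (hwvar : ∀ t (v : Fin m → ℝ), ∫ ω, (v ⬝ᵥ w t ω) ^ 2 ∂μ ≥ εw * (v ⬝ᵥ v))
    (x : ℕ → Ω → Fin n → ℝ)
    (hx0 : ∀ ω, x 0 ω = x0)
    (hx : ∀ k ω, x (k + 1) ω =
      A.mulVec (x k ω) + B.mulVec (s k ω) + F.mulVec (w k ω)) :
    ∀ k (v : Fin n → ℝ),
      ∫ ω, (v ⬝ᵥ x k ω) ^ 2 ∂μ ≥
        εs * (∑ j ∈ Finset.range k,
          (Bᵀ.mulVec ((Aᵀ ^ j).mulVec v)) ⬝ᵥ (Bᵀ.mulVec ((Aᵀ ^ j).mulVec v))) +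
        εw * (∑ j ∈ Finset.range k,
          (Fᵀ.mulVec ((Aᵀ ^ j).mulVec v)) ⬝ᵥ (Fᵀ.mulVec ((Aᵀ ^ j).mulVec v))) := by
  intro k v
  set u : ℕ → Fin r → ℝ := fun t => Bᵀ *ᵥ (Aᵀ ^ (k - 1 - t)) *ᵥ v
  set q : ℕ → Fin m → ℝ := fun t => Fᵀ *ᵥ (Aᵀ ^ (k - 1 - t)) *ᵥ v
  have hrepr : ∀ ω, v ⬝ᵥ x k ω =
      v ⬝ᵥ (A ^ k) *ᵥ x0 + ∑ t ∈ range k, (u t ⬝ᵥ s t ω + q t ⬝ᵥ w t ω) := by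
    intro ω
    rw [eq_pow_mulVec_add_sum_of_succ A (x := (x · ω)) (b := fun t => B *ᵥ s t ω + F *ᵥ w t ω)
      (fun k => by rw [hx, add_assoc]) k, hx0, dotProduct_add, dotProduct_sum]
    simp only [u, q, mulVec_add, dotProduct_add, dotProduct_mulVec_eq_transpose_mulVec_dotProduct,
      transpose_mul, transpose_pow, mulVec_mulVec]
  calc εs * (∑ j ∈ range k, (Bᵀ *ᵥ (Aᵀ ^ j) *ᵥ v) ⬝ᵥ (Bᵀ *ᵥ (Aᵀ ^ j) *ᵥ v))
        + εw * (∑ j ∈ range k, (Fᵀ *ᵥ (Aᵀ ^ j) *ᵥ v) ⬝ᵥ (Fᵀ *ᵥ (Aᵀ ^ j) *ᵥ v))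
      = εs * ∑ t ∈ range k, u t ⬝ᵥ u t + εw * ∑ t ∈ range k, q t ⬝ᵥ q t := by
        congr 2 <;> exact (sum_range_reflect _ k).symm
    _ ≤ ∑ t ∈ range k, ∫ ω, (u t ⬝ᵥ s t ω) ^ 2 ∂μ + ∑ t ∈ range k, ∫ ω, (q t ⬝ᵥ w t ω) ^ 2 ∂μ := by
        rw [mul_sum, mul_sum]
        exact add_le_add (sum_le_sum fun t _ => hsvar t (u t))
          (sum_le_sum fun t _ => hwvar t (q t))
    _ ≤ ∫ ω, (v ⬝ᵥ (A ^ k) *ᵥ x0 + ∑ t ∈ range k, (u t ⬝ᵥ s t ω + q t ⬝ᵥ w t ω)) ^ 2 ∂μ :=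
        sum_integral_sq_two_inputs_le hsL2 hwL2 hss hww hsw hsmean hwmean u q _ k
    _ = ∫ ω, (v ⬝ᵥ x k ω) ^ 2 ∂μ := by simp_rw [hrepr]

/-- For the stochastic recursion `x_{k+1} = A x_k + B s_k + F w_k` driven by a combined
pairwise independent, mean-zero, square-integrable family `{s_t} ∪ {w_t}` with
`𝔼[⟨u,s_t⟩²] ≥ ε_s‖u‖²` and `𝔼[⟨v,w_t⟩²] ≥ ε_w‖v‖²`, one has
`𝔼[⟨v,x_k⟩²] ≥ ε_s ∑_{j<k} ‖Bᵀ(Aᵀ)^j v‖² + ε_w ∑_{j<k} ‖Fᵀ(Aᵀ)^j v‖²`. -/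
theorem second_moment_lower_bound_two_inputs {Ω : Type*} [MeasurableSpace Ω]
    (μ : Measure Ω) [IsProbabilityMeasure μ]
    (n r m : ℕ) (A : Matrix (Fin n) (Fin n) ℝ)
    (B : Matrix (Fin n) (Fin r) ℝ) (F : Matrix (Fin n) (Fin m) ℝ)
    (x0 : Fin n → ℝ)
    (s : ℕ → Ω → Fin r → ℝ) (w : ℕ → Ω → Fin m → ℝ)
    (hsL2 : ∀ t i, MemLp (fun ω => s t ω i) 2 μ)
    (hwL2 : ∀ t i, MemLp (fun ω => w t ω i) 2 μ)
    -- the combined family {s_t} ∪ {w_t} is pairwise independent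
    (hss : ∀ t t', t ≠ t' → IndepFun (s t) (s t') μ)
    (hww : ∀ t t', t ≠ t' → IndepFun (w t) (w t') μ)
    (hsw : ∀ t t', IndepFun (s t) (w t') μ)
    (hsmean : ∀ t i, ∫ ω, s t ω i ∂μ = 0)
    (hwmean : ∀ t i, ∫ ω, w t ω i ∂μ = 0)
    (εs : ℝ) (hεs : 0 < εs)
    (hsvar : ∀ t (u : Fin r → ℝ), ∫ ω, (u ⬝ᵥ s t ω) ^ 2 ∂μ ≥ εs * (u ⬝ᵥ u))
    (εw : ℝ) (hεw : 0 ≤ εw)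
    (hwvar : ∀ t (v : Fin m → ℝ), ∫ ω, (v ⬝ᵥ w t ω) ^ 2 ∂μ ≥ εw * (v ⬝ᵥ v))
    (x : ℕ → Ω → Fin n → ℝ)
    (hx0 : ∀ ω, x 0 ω = x0)
    (hx : ∀ k ω, x (k + 1) ω =
      A.mulVec (x k ω) + B.mulVec (s k ω) + F.mulVec (w k ω)) :
    ∀ k (v : Fin n → ℝ),
      ∫ ω, (v ⬝ᵥ x k ω) ^ 2 ∂μ ≥
        εs * (∑ j ∈ Finset.range k,
          (Bᵀ.mulVec ((Aᵀ ^ j).mulVec v)) ⬝ᵥ (Bᵀ.mulVec ((Aᵀ ^ j).mulVec v))) +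
        εw * (∑ j ∈ Finset.range k,
          (Fᵀ.mulVec ((Aᵀ ^ j).mulVec v)) ⬝ᵥ (Fᵀ.mulVec ((Aᵀ ^ j).mulVec v))) :=
  second_moment_lower_bound_two_inputs_general μ n r m A B F x0 s w hsL2 hwL2 hss hww hsw hsmean
    hwmean εs hsvar εw hwvar x hx0 hx
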